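/- For every integer N ≥ 3 and every real p with 1/2 < p ≤ 1, d2(N, p) < 0. -/
import Mathlib


/-- The quantity `d1(N, p)`. -/
noncomputable def d1 (N : ℕ) (p : ℝ) : ℝ :=
  -(N : ℝ) ^ 4 * (1 - 2 * p + 2 * p ^ 2) ^ 2
    + (N : ℝ) ^ 3 * (1 - 6 * p + 17 * p ^ 2 - 22 * p ^ 3 + 16 * p ^ 4)
    + (N : ℝ) ^ 2 * (-1 + 4 * p - 17 * p ^ 2 + 29 * p ^ 3 - 26 * p ^ 4)
    + 2 * (N : ℝ) * p * (-1 + 6 * p - 12 * p ^ 2 + 10 * p ^ 3)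
    + (p - 4 * p ^ 2 + 9 * p ^ 3 - 6 * p ^ 4)

/-- The quantity `d2(N, p)`. -/
noncomputable def d2 (N : ℕ) (p : ℝ) : ℝ :=
  (N : ℝ) ^ 4 * (-1 + 4 * p - 12 * p ^ 2 + 16 * p ^ 3 - 8 * p ^ 4)
    + (N : ℝ) ^ 3 * p * (-4 + 31 * p - 56 * p ^ 2 + 34 * p ^ 3)
    + (N : ℝ) ^ 2 * (p - 33 * p ^ 2 + 77 * p ^ 3 - 52 * p ^ 4)
    + (N : ℝ) * p * (-1 + 22 * p - 52 * p ^ 2 + 32 * p ^ 3)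
    + (p - 8 * p ^ 2 + 15 * p ^ 3 - 6 * p ^ 4)

/-- The quantity `d3(N, p)`. -/
noncomputable def d3 (N : ℕ) (p : ℝ) : ℝ :=
  (N : ℝ) * (p - 1) *
    (p - 12 * p ^ 3 + 4 * (N : ℝ) ^ 3 * p * (1 - 2 * p + 2 * p ^ 2)
      + (N : ℝ) * p * (1 - 12 * p + 33 * p ^ 2)
      - (N : ℝ) ^ 2 * (1 + 4 * p - 19 * p ^ 2 + 29 * p ^ 3))

theorem stmt17_aux (m q : ℝ) (hm : 0 ≤ m) (hq0 : 0 < q) (hq1 : q ≤ 1) :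
    (-111/4 + 47/2*q - 8*q^2 + 15*q^3 - 27/4*q^4)
      + m*(-305/8 + 101/4*q - 35/4*q^2 + 87/4*q^3 - 113/8*q^4)
      + m^2*(-41/2 + 71/8*q - 27/8*q^2 + 81/8*q^3 - 89/8*q^4)
      + m^3*(-41/8 + q - 1/2*q^2 + 3/2*q^3 - 31/8*q^4)
      + m^4*(-1/2 - 1/2*q^4) < 0 := by
  have h1 : (0:ℝ) ≤ 1 - q := by linarith
  have k1 : (0:ℝ) ≤ (1-q)*q := mul_nonneg h1 hq0.le
  have k2 : (0:ℝ) ≤ (1-q)*q^2 := mul_nonneg h1 (sq_nonneg q)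
  have k3 : (0:ℝ) ≤ (1-q)*q^3 := mul_nonneg h1 (pow_nonneg hq0.le 3)
  have k4 : (0:ℝ) ≤ (1-q)^2*q^2 := mul_nonneg (sq_nonneg _) (sq_nonneg _)
  have k5 : (0:ℝ) ≤ (1-q)^2*q := mul_nonneg (sq_nonneg _) hq0.le
  have g0 : -111/4 + 47/2*q - 8*q^2 + 15*q^3 - 27/4*q^4 < 0 := by
    nlinarith [h1, k1, k2, k3, k4, k5]
  have g1 : -305/8 + 101/4*q - 35/4*q^2 + 87/4*q^3 - 113/8*q^4 ≤ 0 := by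
    nlinarith [h1, k1, k2, k3, k4, k5]
  have g2 : -41/2 + 71/8*q - 27/8*q^2 + 81/8*q^3 - 89/8*q^4 ≤ 0 := by
    nlinarith [h1, k1, k2, k3, k4, k5]
  have g3 : -41/8 + q - 1/2*q^2 + 3/2*q^3 - 31/8*q^4 ≤ 0 := by
    nlinarith [h1, k1, k2, k3, k4, k5]
  have g4 : -1/2 - 1/2*q^4 ≤ 0 := by nlinarith [sq_nonneg (q^2)]
  have hm2 : (0:ℝ) ≤ m^2 := sq_nonneg m
  have hm3 : (0:ℝ) ≤ m^3 := pow_nonneg hm 3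
  have hm4 : (0:ℝ) ≤ m^4 := pow_nonneg hm 4
  have t1 := mul_nonpos_of_nonneg_of_nonpos hm g1
  have t2 := mul_nonpos_of_nonneg_of_nonpos hm2 g2
  have t3 := mul_nonpos_of_nonneg_of_nonpos hm3 g3
  have t4 := mul_nonpos_of_nonneg_of_nonpos hm4 g4
  linarith

theorem stmt17 (N : ℕ) (hN : 3 ≤ N) (p : ℝ) (hp : 1 / 2 < p) (hp1 : p ≤ 1) :
    d2 N p < 0 := by
  have hn : (3:ℝ) ≤ (N:ℝ) := by exact_mod_cast hN
  have hm : (0:ℝ) ≤ (N:ℝ) - 3 := by linarith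
  have hq0 : (0:ℝ) < 2*p - 1 := by linarith
  have hq1 : 2*p - 1 ≤ 1 := by linarith
  have key : d2 N p = (-111/4 + 47/2*(2*p-1) - 8*(2*p-1)^2 + 15*(2*p-1)^3 - 27/4*(2*p-1)^4)
      + ((N:ℝ)-3)*(-305/8 + 101/4*(2*p-1) - 35/4*(2*p-1)^2 + 87/4*(2*p-1)^3 - 113/8*(2*p-1)^4)
      + ((N:ℝ)-3)^2*(-41/2 + 71/8*(2*p-1) - 27/8*(2*p-1)^2 + 81/8*(2*p-1)^3 - 89/8*(2*p-1)^4)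
      + ((N:ℝ)-3)^3*(-41/8 + (2*p-1) - 1/2*(2*p-1)^2 + 3/2*(2*p-1)^3 - 31/8*(2*p-1)^4)
      + ((N:ℝ)-3)^4*(-1/2 - 1/2*(2*p-1)^4) := by
    unfold d2; ring
  rw [key]
  exact stmt17_aux ((N:ℝ)-3) (2*p-1) hm hq0 hq1
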